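/- Let r, m ≥ 1 and let P₁, …, P_m : ℤ^r → ℂ be the symbols of an overdetermined system of m Fourier multipliers applied to a single unknown on the torus 𝕋^r. Then the following are equivalent: (i) for every u : ℤ^r → ℂ of polynomial growth such that for each 1 ≤ j ≤ m the sequence ξ ↦ P_j(ξ)u(ξ) is rapidly decreasing, u is itself rapidly decreasing; (ii) there exist C > 0, k ∈ ℝ and a finite set F ⊆ ℤ^r such that max_{1 ≤ j ≤ m} |P_j(ξ)| ≥ C(1+‖ξ‖²)^{k/2} for all ξ ∈ ℤ^r \ F. -/

import Mathlib

noncomputable section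

open scoped BigOperators

/-- The weight `1 + ‖ξ‖²` for a frequency `ξ ∈ ℤ^r`. -/
def wt {r : ℕ} (ξ : Fin r → ℤ) : ℝ :=
  1 + ∑ i, ((ξ i : ℝ)) ^ 2

/-- A scalar sequence indexed by `ℤ^r` is rapidly decreasing. -/
def RapidDecayC {r : ℕ} (u : (Fin r → ℤ) → ℂ) : Prop :=
  ∀ M : ℝ, 0 < M → ∃ C : ℝ, 0 < C ∧ ∀ ξ, ‖u ξ‖ ≤ C * wt ξ ^ (-(M / 2))

/-- A scalar sequence indexed by `ℤ^r` has polynomial growth. -/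
def PolyGrowthC {r : ℕ} (u : (Fin r → ℤ) → ℂ) : Prop :=
  ∃ C N : ℝ, 0 < C ∧ 0 < N ∧ ∀ ξ, ‖u ξ‖ ≤ C * wt ξ ^ (N / 2)

/-!
Write `s ξ = max_j |P_j(ξ)|`. All `P_j u` decay rapidly iff `s u` does, so the system behaves
like the single multiplier `s`. If `s ≥ C (1+‖ξ‖²)^{k/2}` off a finite set, then
`|u| ≤ C⁻¹ (1+‖ξ‖²)^{-k/2} |s u|` there, which turns rapid decay of `s u` into that of `u`.
Otherwise there are frequencies `ξₙ` of weight `> n` with `s(ξₙ) < (1+‖ξₙ‖²)^{-n/2}`, and the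
indicator of `{ξₙ}` is a bounded, non-decaying `u` with `s u` rapidly decreasing.
Rapid decay is handled as `u = O((1+‖ξ‖²)^{-M/2})` along the cofinite filter, so finite
exceptional sets cost nothing.
-/

open Asymptotics Filter

lemma one_le_wt {r : ℕ} (ξ : Fin r → ℤ) : 1 ≤ wt ξ :=
  le_add_of_nonneg_right (Finset.sum_nonneg fun _ _ => sq_nonneg _)

lemma wt_pos {r : ℕ} (ξ : Fin r → ℤ) : 0 < wt ξ := one_pos.trans_le (one_le_wt ξ)

lemma wt_rpow_pos {r : ℕ} (ξ : Fin r → ℤ) (s : ℝ) : 0 < wt ξ ^ s :=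
  Real.rpow_pos_of_pos (wt_pos ξ) s

lemma wt_rpow_le_wt_rpow {r : ℕ} (ξ : Fin r → ℤ) {s t : ℝ} (h : s ≤ t) :
    wt ξ ^ s ≤ wt ξ ^ t :=
  Real.rpow_le_rpow_of_exponent_le (one_le_wt ξ) h

lemma finite_setOf_wt_le {r : ℕ} (B : ℝ) : {ξ : Fin r → ℤ | wt ξ ≤ B}.Finite := by
  refine (Set.Finite.pi fun _ : Fin r => Set.finite_Icc (-⌈B⌉) ⌈B⌉).subset fun ξ hξ i _ => ?_
  have hsq : ξ i ^ 2 ≤ ⌈B⌉ := by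
    have hξ' : 1 + ∑ j, ((ξ j : ℝ)) ^ 2 ≤ B := hξ
    have := Finset.single_le_sum (f := fun j => ((ξ j : ℝ)) ^ 2) (fun _ _ => sq_nonneg _)
      (Finset.mem_univ i)
    exact_mod_cast (show ((ξ i : ℝ)) ^ 2 ≤ ⌈B⌉ by linarith [Int.le_ceil B])
  exact abs_le.mp ((Int.natCast_natAbs (ξ i) ▸ Int.natAbs_le_self_sq (ξ i)).trans hsq)

lemma rapidDecayC_iff_isBigO {r : ℕ} (u : (Fin r → ℤ) → ℂ) :
    RapidDecayC u ↔ ∀ M : ℝ, u =O[cofinite] fun ξ => wt ξ ^ (-(M / 2)) := by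
  constructor
  · intro h M
    obtain ⟨C, hC, hCu⟩ := h (max M 1) (by positivity)
    refine IsBigO.of_bound C (Eventually.of_forall fun ξ => ?_)
    rw [Real.norm_of_nonneg (wt_rpow_pos ξ _).le]
    exact (hCu ξ).trans <| mul_le_mul_of_nonneg_left
      (wt_rpow_le_wt_rpow ξ (by linarith [le_max_left M 1])) hC.le
  · intro h M _
    obtain ⟨C, hC, hb⟩ := bound_of_isBigO_cofinite (h M)
    refine ⟨C, hC, fun ξ => ?_⟩
    simpa [Real.norm_of_nonneg (wt_rpow_pos ξ _).le] using hb (wt_rpow_pos ξ (-(M / 2))).ne'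

lemma RapidDecayC.of_norm_le {r : ℕ} {u v : (Fin r → ℤ) → ℂ} (hv : RapidDecayC v)
    (h : ∀ ξ, ‖u ξ‖ ≤ ‖v ξ‖) : RapidDecayC u := by
  rw [rapidDecayC_iff_isBigO] at hv ⊢
  exact fun M =>
    (IsBigO.of_bound 1 (Eventually.of_forall fun ξ => by simpa using h ξ)).trans (hv M)

lemma polyGrowthC_of_norm_le {r : ℕ} {u : (Fin r → ℤ) → ℂ} {B : ℝ} (h : ∀ ξ, ‖u ξ‖ ≤ B) :
    PolyGrowthC u := by
  refine ⟨|B| + 1, 1, by positivity, one_pos, fun ξ => ?_⟩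
  calc ‖u ξ‖ ≤ (|B| + 1) * 1 := by linarith [h ξ, le_abs_self B]
    _ ≤ (|B| + 1) * wt ξ ^ ((1 : ℝ) / 2) := by
      gcongr
      exact Real.one_le_rpow (one_le_wt ξ) (by norm_num)

lemma not_rapidDecayC_of_forall_exists_lt_wt {r : ℕ} {u : (Fin r → ℤ) → ℂ}
    (h : ∀ n : ℕ, ∃ ξ, n < wt ξ ∧ 1 ≤ ‖u ξ‖) : ¬ RapidDecayC u := by
  intro hu
  obtain ⟨C, -, hC⟩ := hu 2 two_pos
  obtain ⟨ξ, hξ, hu1⟩ := h ⌈C⌉₊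
  have hCξ : C < wt ξ := (Nat.le_ceil C).trans_lt hξ
  have : C * wt ξ ^ (-(2 / 2 : ℝ)) < 1 := by
    rw [show -(2 / 2 : ℝ) = -1 by norm_num, Real.rpow_neg_one, ← div_eq_mul_inv,
      div_lt_one (wt_pos ξ)]
    exact hCξ
  linarith [hC ξ]

lemma norm_ofReal_sup'_norm {ι E : Type*} [SeminormedAddCommGroup E] {s : Finset ι}
    (hs : s.Nonempty) (f : ι → E) :
    ‖((s.sup' hs fun j => ‖f j‖ : ℝ) : ℂ)‖ = s.sup' hs fun j => ‖f j‖ :=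
  Complex.norm_of_nonneg <|
    (norm_nonneg (f hs.choose)).trans (Finset.le_sup' (fun j => ‖f j‖) hs.choose_spec)

lemma forall_rapidDecayC_mul_iff {ι : Type*} [Fintype ι] {r : ℕ}
    (hι : (Finset.univ : Finset ι).Nonempty) (P : ι → (Fin r → ℤ) → ℂ) (u : (Fin r → ℤ) → ℂ) :
    (∀ j, RapidDecayC fun ξ => P j ξ * u ξ) ↔
      RapidDecayC fun ξ => ((Finset.univ.sup' hι fun j => ‖P j ξ‖ : ℝ) : ℂ) * u ξ := by
  have hsup (ξ) := norm_ofReal_sup'_norm hι fun j => P j ξ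
  constructor
  · intro h
    simp only [rapidDecayC_iff_isBigO] at h ⊢
    intro M
    refine IsBigO.trans ?_ (IsBigO.fun_sum (s := Finset.univ) fun j _ => (h j M).norm_left)
    refine IsBigO.of_bound 1 (Eventually.of_forall fun ξ => ?_)
    obtain ⟨j, -, hj⟩ := Finset.exists_mem_eq_sup' hι fun j => ‖P j ξ‖
    rw [one_mul, norm_mul, hsup, hj, ← norm_mul,
      Real.norm_of_nonneg (Finset.sum_nonneg fun _ _ => norm_nonneg _)]
    exact Finset.single_le_sum (f := fun j => ‖P j ξ * u ξ‖) (fun _ _ => norm_nonneg _)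
      (Finset.mem_univ j)
  · intro h j
    refine h.of_norm_le fun ξ => ?_
    rw [norm_mul, norm_mul, hsup]
    gcongr
    exact Finset.le_sup' (fun j => ‖P j ξ‖) (Finset.mem_univ j)

def HasPolyLowerBound {r : ℕ} (a : (Fin r → ℤ) → ℝ) : Prop :=
  ∃ (C : ℝ) (k : ℝ) (F : Set (Fin r → ℤ)), 0 < C ∧ F.Finite ∧
    ∀ ξ, ξ ∉ F → a ξ ≥ C * wt ξ ^ (k / 2)

def GloballyHypoelliptic {r : ℕ} (p : (Fin r → ℤ) → ℂ) : Prop :=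
  ∀ u : (Fin r → ℤ) → ℂ, PolyGrowthC u → RapidDecayC (fun ξ => p ξ * u ξ) → RapidDecayC u

lemma HasPolyLowerBound.globallyHypoelliptic {r : ℕ} {p : (Fin r → ℤ) → ℂ}
    (hp : HasPolyLowerBound fun ξ => ‖p ξ‖) : GloballyHypoelliptic p := by
  obtain ⟨C, k, F, hC, hF, hlow⟩ := hp
  intro u _ hpu
  rw [rapidDecayC_iff_isBigO] at hpu ⊢
  intro M
  have hdiv : u =O[cofinite] fun ξ => wt ξ ^ (-(k / 2)) * ‖p ξ * u ξ‖ := by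
    refine IsBigO.of_bound C⁻¹ (hF.eventually_cofinite_notMem.mono fun ξ hξ => ?_)
    have hw := wt_rpow_pos ξ (-(k / 2))
    calc ‖u ξ‖ = C⁻¹ * wt ξ ^ (-(k / 2)) * (C * wt ξ ^ (k / 2)) * ‖u ξ‖ := by
          rw [Real.rpow_neg (wt_pos ξ).le]
          field_simp [(wt_rpow_pos ξ (k / 2)).ne']
      _ ≤ C⁻¹ * wt ξ ^ (-(k / 2)) * ‖p ξ‖ * ‖u ξ‖ := by
          gcongr
          exact hlow ξ hξ
      _ = C⁻¹ * ‖wt ξ ^ (-(k / 2)) * ‖p ξ * u ξ‖‖ := by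
          rw [norm_mul, norm_norm, norm_mul, Real.norm_of_nonneg hw.le]
          ring
  refine hdiv.trans (((isBigO_refl _ _).mul (hpu (M - k)).norm_left).congr_right fun ξ => ?_)
  rw [← Real.rpow_add (wt_pos ξ)]
  ring_nf

lemma exists_counterexample_of_not_hasPolyLowerBound {r : ℕ} {p : (Fin r → ℤ) → ℂ}
    (hp : ¬ HasPolyLowerBound fun ξ => ‖p ξ‖) :
    ∃ u, PolyGrowthC u ∧ RapidDecayC (fun ξ => p ξ * u ξ) ∧ ¬ RapidDecayC u := by
  simp only [HasPolyLowerBound, not_exists, not_and, not_forall, not_le, exists_prop] at hp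
  choose ξs hξs_wt hξs_p using fun n : ℕ => hp 1 (-n) _ one_pos (finite_setOf_wt_le n)
  have hwt (n : ℕ) : (n : ℝ) < wt (ξs n) := not_le.mp (hξs_wt n)
  set u := (Set.range ξs).indicator (1 : (Fin r → ℤ) → ℂ)
  have hu_norm (ξ) : ‖u ξ‖ ≤ 1 := by
    by_cases hξ : ξ ∈ Set.range ξs <;> simp [u, hξ]
  refine ⟨u, polyGrowthC_of_norm_le hu_norm, ?_,
    not_rapidDecayC_of_forall_exists_lt_wt fun n => ⟨ξs n, hwt n, by simp [u]⟩⟩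
  rw [rapidDecayC_iff_isBigO]
  intro M
  refine IsBigO.of_bound 1 (((Set.finite_Iio ⌈M⌉₊).image ξs).eventually_cofinite_notMem.mono
    fun ξ hξ => ?_)
  rw [one_mul, Real.norm_of_nonneg (wt_rpow_pos ξ _).le]
  by_cases hS : ξ ∈ Set.range ξs
  · obtain ⟨n, rfl⟩ := hS
    have hMn : M ≤ n := Nat.ceil_le.mp (not_lt.mp fun h => hξ ⟨n, h, rfl⟩)
    rw [show u (ξs n) = 1 by simp [u], mul_one]
    refine (hξs_p n).le.trans ?_
    rw [one_mul]
    exact wt_rpow_le_wt_rpow _ (by linarith)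
  · rw [show u ξ = 0 by simp [u, hS], mul_zero, norm_zero]
    exact (wt_rpow_pos ξ _).le

theorem globallyHypoelliptic_iff_hasPolyLowerBound {r : ℕ} (p : (Fin r → ℤ) → ℂ) :
    GloballyHypoelliptic p ↔ HasPolyLowerBound fun ξ => ‖p ξ‖ := by
  refine ⟨fun h => by_contra fun hp => ?_, HasPolyLowerBound.globallyHypoelliptic⟩
  obtain ⟨u, hu, hpu, hnu⟩ := exists_counterexample_of_not_hasPolyLowerBound hp
  exact hnu (h u hu hpu)

theorem overdetermined_system_GH_iff_general (r m : ℕ) (hm : 1 ≤ m)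
    (P : Fin m → (Fin r → ℤ) → ℂ) :
    (∀ u : (Fin r → ℤ) → ℂ, PolyGrowthC u →
        (∀ j : Fin m, RapidDecayC (fun ξ => P j ξ * u ξ)) → RapidDecayC u) ↔
      (∃ (C : ℝ) (k : ℝ) (F : Set (Fin r → ℤ)), 0 < C ∧ F.Finite ∧
        ∀ ξ, ξ ∉ F →
          Finset.univ.sup' ⟨(⟨0, hm⟩ : Fin m), Finset.mem_univ _⟩ (fun j => ‖P j ξ‖) ≥
            C * wt ξ ^ (k / 2)) := by
  have hm' : (Finset.univ : Finset (Fin m)).Nonempty := ⟨⟨0, hm⟩, Finset.mem_univ _⟩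
  simp only [forall_rapidDecayC_mul_iff hm' P]
  have key := globallyHypoelliptic_iff_hasPolyLowerBound fun ξ =>
    ((Finset.univ.sup' hm' fun j => ‖P j ξ‖ : ℝ) : ℂ)
  simp only [norm_ofReal_sup'_norm] at key
  exact key

theorem overdetermined_system_GH_iff (r m : ℕ) (hr : 1 ≤ r) (hm : 1 ≤ m)
    (P : Fin m → (Fin r → ℤ) → ℂ) :
    (∀ u : (Fin r → ℤ) → ℂ, PolyGrowthC u →
        (∀ j : Fin m, RapidDecayC (fun ξ => P j ξ * u ξ)) → RapidDecayC u) ↔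
      (∃ (C : ℝ) (k : ℝ) (F : Set (Fin r → ℤ)), 0 < C ∧ F.Finite ∧
        ∀ ξ, ξ ∉ F →
          Finset.univ.sup' ⟨(⟨0, hm⟩ : Fin m), Finset.mem_univ _⟩ (fun j => ‖P j ξ‖) ≥
            C * wt ξ ^ (k / 2)) :=
  overdetermined_system_GH_iff_general r m hm P
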